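/- arXiv:0907.1356 — 2 statements merged into one kernel-verified Lean document; each statement's English description precedes it below -/
import Mathlib

section
/- For every real number x with 0 < x < 1 and every real k > 2, one has (1-x)^k < 1 - k·x + (k(k-1)/2)·x². -/
/-! The gap `g(y) = 1 - k y + k(k-1)/2 y² - (1-y)^k` vanishes at `0`, and its derivative
`k ((k-1) y - 1 + (1-y)^(k-1))` is positive on `(0, 1)` by Bernoulli's inequality with exponent
`k - 1 > 1`; hence `g` is strictly increasing on `[0, 1]`. -/

open Set

noncomputable def gerberGap (k y : ℝ) : ℝ :=
  1 - k * y + (k * (k - 1) / 2) * y ^ 2 - (1 - y) ^ k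

lemma gerberGap_zero (k : ℝ) : gerberGap k 0 = 0 := by
  simp [gerberGap]

lemma one_sub_mul_lt_rpow_one_sub {y p : ℝ} (hy0 : 0 < y) (hy1 : y ≤ 1) (hp : 1 < p) :
    1 - p * y < (1 - y) ^ p := by
  simpa [sub_eq_add_neg] using
    one_add_mul_self_lt_rpow_one_add (s := -y) (by linarith) (by linarith) hp

lemma hasDerivAt_rpow_one_sub {k : ℝ} (hk : 1 ≤ k) (y : ℝ) :
    HasDerivAt (fun y => (1 - y) ^ k) (-(k * (1 - y) ^ (k - 1))) y := by
  simpa using ((hasDerivAt_id y).const_sub 1).rpow_const (p := k) (Or.inr hk)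

lemma hasDerivAt_gerberGap {k : ℝ} (hk : 1 ≤ k) (y : ℝ) :
    HasDerivAt (gerberGap k) (k * ((k - 1) * y - 1 + (1 - y) ^ (k - 1))) y := by
  have hpoly : HasDerivAt (fun y => 1 - k * y + (k * (k - 1) / 2) * y ^ 2)
      (-k + (k * (k - 1) / 2) * (2 * y)) y := by
    simpa using (((hasDerivAt_id y).const_mul k).const_sub 1).fun_add
      ((hasDerivAt_pow 2 y).const_mul (k * (k - 1) / 2))
  exact (hpoly.sub (hasDerivAt_rpow_one_sub hk y)).congr_deriv (by ring)

lemma strictMonoOn_gerberGap {k : ℝ} (hk : 2 < k) : StrictMonoOn (gerberGap k) (Icc 0 1) := by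
  have hderiv := hasDerivAt_gerberGap (k := k) (by linarith)
  refine strictMonoOn_of_deriv_pos (convex_Icc 0 1)
    (fun y _ => (hderiv y).continuousAt.continuousWithinAt) fun y hy => ?_
  rw [interior_Icc] at hy
  have hbernoulli := one_sub_mul_lt_rpow_one_sub hy.1 hy.2.le (p := k - 1) (by linarith)
  rw [(hderiv y).deriv]
  exact mul_pos (by linarith) (by linarith)

theorem gerber_upper (x k : ℝ) (hx0 : 0 < x) (hx1 : x < 1) (hk : 2 < k) :
    (1 - x) ^ k < 1 - k * x + (k * (k - 1) / 2) * x ^ 2 := by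
  have hgap : gerberGap k 0 < gerberGap k x :=
    strictMonoOn_gerberGap hk (left_mem_Icc.2 zero_le_one) ⟨hx0.le, hx1.le⟩ hx0
  rwa [gerberGap_zero, gerberGap, sub_pos] at hgap
end

section
/- If integers m ≥ 2 and k ≥ 1 satisfy 1^k + 2^k + ... + (m-1)^k = m^k, then k + 1 < m < 2(k+1). -/
/-!
Discrete forms of `∑_{j=1}^{m-1} j^k < ∫₁^m t^k dt` and `∫₀^m t^k dt < ∑_{j=1}^m j^k`: the
increment `(i+1)^(k+1) - i^(k+1)` lies between `(k+1) i^k` and `(k+1) (i+1)^k`, so telescoping gives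
`(k+1) ∑_{j=1}^{m-1} j^k < m^(k+1) < (k+1) ∑_{j=1}^{m} j^k` (the right one strict for `k ≥ 1`).
Under `∑_{j=1}^{m-1} j^k = m^k` the left inequality reads `(k+1) m^k < m · m^k`, and since then
`∑_{j=1}^{m} j^k = 2 m^k` the right one reads `m · m^k < 2(k+1) m^k`.
-/

open Finset

lemma pow_succ_add_mul_pow_le_add_one_pow (i k : ℕ) :
    i ^ (k + 1) + (k + 1) * i ^ k ≤ (i + 1) ^ (k + 1) := by
  induction k with
  | zero => simp
  | succ k ih =>
    calc i ^ (k + 2) + (k + 2) * i ^ (k + 1)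
        ≤ i ^ (k + 2) + (k + 2) * i ^ (k + 1) + (k + 1) * i ^ k := Nat.le_add_right _ _
      _ = (i + 1) * (i ^ (k + 1) + (k + 1) * i ^ k) := by ring
      _ ≤ (i + 1) * (i + 1) ^ (k + 1) := Nat.mul_le_mul_left _ ih
      _ = (i + 1) ^ (k + 2) := by ring

lemma add_one_pow_le_pow_succ_add_mul_add_one_pow (i k : ℕ) :
    (i + 1) ^ (k + 1) ≤ i ^ (k + 1) + (k + 1) * (i + 1) ^ k := by
  induction k with
  | zero => simp
  | succ k ih =>
    have hmono : i ^ (k + 1) ≤ (i + 1) ^ (k + 1) := Nat.pow_le_pow_left (Nat.le_succ i) _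
    calc (i + 1) ^ (k + 2) = (i + 1) * (i + 1) ^ (k + 1) := by ring
      _ ≤ (i + 1) * (i ^ (k + 1) + (k + 1) * (i + 1) ^ k) := Nat.mul_le_mul_left _ ih
      _ = i ^ (k + 2) + i ^ (k + 1) + (k + 1) * (i + 1) ^ (k + 1) := by ring
      _ ≤ i ^ (k + 2) + (k + 2) * (i + 1) ^ (k + 1) := by linarith

lemma succ_mul_sum_Icc_pow_lt (k n : ℕ) :
    (k + 1) * ∑ j ∈ Icc 1 n, j ^ k < (n + 1) ^ (k + 1) := by
  induction n with
  | zero => simp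
  | succ n ih =>
    rw [sum_Icc_succ_top (Nat.le_add_left 1 n), mul_add]
    have := pow_succ_add_mul_pow_le_add_one_pow (n + 1) k
    omega

lemma pow_succ_lt_succ_mul_sum_Icc_pow {k n : ℕ} (hk : 1 ≤ k) (hn : 1 ≤ n) :
    n ^ (k + 1) < (k + 1) * ∑ j ∈ Icc 1 n, j ^ k := by
  induction n, hn using Nat.le_induction with
  | base => simpa using Nat.succ_le_iff.mp hk
  | succ n _ ih =>
    rw [sum_Icc_succ_top (Nat.le_add_left 1 n), mul_add]
    have := add_one_pow_le_pow_succ_add_mul_add_one_pow n k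
    omega

theorem erdos_moser_bounds (m k : ℕ) (hm : 2 ≤ m) (hk : 1 ≤ k)
    (h : ∑ j ∈ Finset.Icc 1 (m - 1), j ^ k = m ^ k) :
    k + 1 < m ∧ m < 2 * (k + 1) := by
  obtain ⟨n, rfl⟩ : ∃ n, m = n + 1 := ⟨m - 1, by omega⟩
  rw [Nat.add_sub_cancel] at h
  have hpow : (n + 1) ^ (k + 1) = (n + 1) * (n + 1) ^ k := pow_succ' _ _
  constructor
  · have hlt := succ_mul_sum_Icc_pow_lt k n
    rw [h, hpow] at hlt
    exact Nat.lt_of_mul_lt_mul_right hlt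
  · have hlt := pow_succ_lt_succ_mul_sum_Icc_pow hk (Nat.le_add_left 1 n)
    rw [sum_Icc_succ_top (Nat.le_add_left 1 n), h, hpow, ← two_mul, ← mul_assoc,
      mul_comm (k + 1)] at hlt
    exact Nat.lt_of_mul_lt_mul_right hlt
end
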